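/- Let u be a bounded harmonic function on a domain Ω ⊆ ℝ^n vanishing continuously on ∂Ω, and let B be Brownian motion started at z ∈ Ω with exit time T from Ω. If P_z(T < ∞ or |B_t| → ∞) = 1 and u(x) → 0 as |x| → ∞ in Ω, then u ≡ 0 on Ω. -/

import Mathlib

/-!
Weak maximum principle instead of optional stopping. At an interior local maximum every second
directional derivative is `≤ 0`, so the Laplacian is `≤ 0`; hence `u + δ‖y‖²`, whose Laplacian is
`2nδ > 0`, cannot have an interior maximum. On `closure Ω ∩ closedBall 0 R` its maximum therefore
lies on `∂Ω`, where `u = 0`, or on the sphere of radius `R`, where `u ≤ ε` once `R` is large.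
Letting `δ → 0` and then `ε → 0` gives `u ≤ 0`, and the same argument for `-u` gives `u ≥ 0`.
-/

open Filter

/-- `u` is harmonic on `Ω`: it is `C²` there and its Laplacian, computed as the
sum of the second partial derivatives in the coordinate directions, vanishes. -/
def IsHarmonicOn {n : ℕ} (u : EuclideanSpace ℝ (Fin n) → ℝ)
    (Ω : Set (EuclideanSpace ℝ (Fin n))) : Prop :=
  ContDiffOn ℝ 2 u Ω ∧ ∀ x ∈ Ω, ∑ i : Fin n,
    fderiv ℝ (fun y => fderiv ℝ u y (EuclideanSpace.single i 1)) x
      (EuclideanSpace.single i 1) = 0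

open Laplacian Topology InnerProductSpace Module

theorem IsLocalMax.deriv_deriv_nonpos {g : ℝ → ℝ} {a : ℝ} (h : IsLocalMax g a)
    (hc : ContinuousAt g a) : deriv (deriv g) a ≤ 0 := by
  by_contra! hpos
  -- The second derivative test makes `a` a local minimum too, so `g` is locally constant.
  have hmin : IsLocalMin g a := isLocalMin_of_deriv_deriv_pos hpos h.deriv_eq_zero hc
  have hconst : g =ᶠ[𝓝 a] fun _ => g a := by
    filter_upwards [h, hmin] with t hmax hmin using le_antisymm hmax hmin
  have hzero : deriv (deriv g) a = 0 := by
    rw [hconst.deriv.deriv.eq_of_nhds]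
    simp
  exact hpos.ne' hzero

section SecondDerivative

variable {E : Type*} [NormedAddCommGroup E] [NormedSpace ℝ E] {f : E → ℝ} {x : E}

theorem ContDiffAt.fderiv_fderiv_apply (hf : ContDiffAt ℝ 2 f x) (e e' : E) :
    fderiv ℝ (fun y => fderiv ℝ f y e) x e' = iteratedFDeriv ℝ 2 f x ![e', e] := by
  have hdf : DifferentiableAt ℝ (fderiv ℝ f) x :=
    (hf.fderiv_right (m := 1) (by norm_num)).differentiableAt (by norm_num)
  rw [iteratedFDeriv_two_apply, fderiv_clm_apply hdf (differentiableAt_const e)]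
  simp

theorem ContDiffAt.iteratedFDeriv_two_self_eq_deriv_deriv (hf : ContDiffAt ℝ 2 f x) (e : E) :
    iteratedFDeriv ℝ 2 f x ![e, e] = deriv (deriv fun t : ℝ => f (x + t • e)) 0 := by
  have hline (t : ℝ) : HasDerivAt (fun t : ℝ => x + t • e) e t := by
    simpa using ((hasDerivAt_id t).smul_const e).const_add x
  have hderiv : deriv (fun t : ℝ => f (x + t • e)) =ᶠ[𝓝 0]
      fun t => fderiv ℝ f (x + t • e) e := by
    have hnear : ∀ᶠ t : ℝ in 𝓝 0, DifferentiableAt ℝ f (x + t • e) :=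
      (hline 0).continuousAt.eventually (by
        simpa using (hf.eventually (by simp)).mono fun y hy => hy.differentiableAt two_ne_zero)
    filter_upwards [hnear] with t ht
    exact (ht.hasFDerivAt.comp_hasDerivAt t (hline t)).deriv
  have hdf : DifferentiableAt ℝ (fun y => fderiv ℝ f y e) x :=
    ((hf.fderiv_right (m := 1) (by norm_num)).differentiableAt (by norm_num)).clm_apply
      (differentiableAt_const e)
  rw [hderiv.deriv_eq, ← hf.fderiv_fderiv_apply]
  have hcomp := (show HasFDerivAt _ _ (x + (0 : ℝ) • e) by simpa using hdf.hasFDerivAt)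
    |>.comp_hasDerivAt (0 : ℝ) (hline 0)
  exact hcomp.deriv.symm

theorem IsLocalMax.iteratedFDeriv_two_self_nonpos (h : IsLocalMax f x) (hf : ContDiffAt ℝ 2 f x)
    (e : E) : iteratedFDeriv ℝ 2 f x ![e, e] ≤ 0 := by
  rw [hf.iteratedFDeriv_two_self_eq_deriv_deriv]
  have hline : ContinuousAt (fun t : ℝ => x + t • e) 0 := by fun_prop
  have hmax : IsLocalMax f (x + (0 : ℝ) • e) := by simpa using h
  exact (hmax.comp_continuous (g := fun t : ℝ => x + t • e) hline).deriv_deriv_nonpos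
    (hf.continuousAt.comp_of_eq hline (by simp))

end SecondDerivative

section MaximumPrinciple

variable {E : Type*} [NormedAddCommGroup E] [InnerProductSpace ℝ E] [FiniteDimensional ℝ E]

theorem IsLocalMax.laplacian_nonpos {f : E → ℝ} {x : E} (h : IsLocalMax f x)
    (hf : ContDiffAt ℝ 2 f x) : Δ f x ≤ 0 := by
  rw [laplacian_eq_iteratedFDeriv_stdOrthonormalBasis]
  exact Finset.sum_nonpos fun i _ => h.iteratedFDeriv_two_self_nonpos hf _

theorem laplacian_norm_sq (x : E) : Δ (fun y : E => ‖y‖ ^ 2) x = 2 * finrank ℝ E := by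
  have hsmooth : ContDiffAt ℝ 2 (fun y : E => ‖y‖ ^ 2) x := (contDiff_norm_sq ℝ).contDiffAt
  have hlin (b : E) : (fun y => (2 • innerSL ℝ y) b) = ⇑((2 : ℝ) • innerSL ℝ b) := by
    ext y
    simp [real_inner_comm]
  rw [laplacian_eq_iteratedFDeriv_stdOrthonormalBasis]
  simp only [← hsmooth.fderiv_fderiv_apply, fderiv_norm_sq_apply, hlin,
    ContinuousLinearMap.fderiv]
  simp [mul_comm]

variable [Nontrivial E] {Ω : Set E} {u : E → ℝ}

theorem not_isLocalMax_add_mul_norm_sq {x : E} (hu : ContDiffAt ℝ 2 u x) (hΔ : 0 ≤ Δ u x)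
    {δ : ℝ} (hδ : 0 < δ) : ¬ IsLocalMax (fun y => u y + δ * ‖y‖ ^ 2) x := by
  intro hmax
  have hsq : ContDiffAt ℝ 2 (δ • fun y : E => ‖y‖ ^ 2) x :=
    ((contDiff_norm_sq ℝ).const_smul δ).contDiffAt
  have hΔv : Δ (fun y => u y + δ * ‖y‖ ^ 2) x = Δ u x + δ * (2 * finrank ℝ E) := by
    rw [show (fun y => u y + δ * ‖y‖ ^ 2) = u + δ • fun y : E => ‖y‖ ^ 2 from rfl,
      hu.laplacian_add hsq, laplacian_smul _ (contDiff_norm_sq ℝ).contDiffAt, laplacian_norm_sq,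
      smul_eq_mul]
  have hpos : 0 < Δ u x + δ * (2 * finrank ℝ E) := by
    have := finrank_pos (R := ℝ) (M := E)
    positivity
  exact (hpos.trans_le (hΔv ▸ hmax.laplacian_nonpos (hu.add hsq))).false

theorem le_add_of_le_frontier_of_le_outside_ball (hΩ : IsOpen Ω)
    (hcont : ContinuousOn u (closure Ω)) (hu : ContDiffOn ℝ 2 u Ω) (hΔ : ∀ x ∈ Ω, 0 ≤ Δ u x)
    {M R : ℝ} (hfront : ∀ x ∈ frontier Ω, u x ≤ M) (hfar : ∀ x ∈ Ω, R ≤ ‖x‖ → u x ≤ M)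
    {δ : ℝ} (hδ : 0 < δ) {x : E} (hx : x ∈ Ω) (hxR : ‖x‖ ≤ R) :
    u x ≤ M + δ * R ^ 2 := by
  set v : E → ℝ := fun y => u y + δ * ‖y‖ ^ 2
  set K := closure Ω ∩ Metric.closedBall 0 R
  have hxK : x ∈ K := ⟨subset_closure hx, mem_closedBall_zero_iff.mpr hxR⟩
  have hvcont : ContinuousOn v K := (hcont.mono Set.inter_subset_left).add
    (by fun_prop : Continuous fun y : E => δ * ‖y‖ ^ 2).continuousOn
  obtain ⟨x₀, hx₀K, hx₀max⟩ :=
    ((isCompact_closedBall 0 R).inter_left isClosed_closure).exists_isMaxOn ⟨x, hxK⟩ hvcont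
  have hx₀R : ‖x₀‖ ^ 2 ≤ R ^ 2 :=
    pow_le_pow_left₀ (norm_nonneg _) (mem_closedBall_zero_iff.mp hx₀K.2) 2
  have hu₀ : u x₀ ≤ M := by
    by_cases hx₀Ω : x₀ ∈ Ω
    · by_cases hlt : ‖x₀‖ < R
      · refine absurd ?_ (not_isLocalMax_add_mul_norm_sq (hu.contDiffAt (hΩ.mem_nhds hx₀Ω))
          (hΔ x₀ hx₀Ω) hδ)
        filter_upwards [(hΩ.inter Metric.isOpen_ball).mem_nhds ⟨hx₀Ω, mem_ball_zero_iff.mpr hlt⟩]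
          with y hy using hx₀max ⟨subset_closure hy.1, Metric.ball_subset_closedBall hy.2⟩
      · exact hfar x₀ hx₀Ω (not_lt.mp hlt)
    · exact hfront x₀ ⟨hx₀K.1, by rwa [hΩ.interior_eq]⟩
  calc u x ≤ v x := le_add_of_nonneg_right (by positivity)
    _ ≤ v x₀ := hx₀max hxK
    _ ≤ M + δ * R ^ 2 := add_le_add hu₀ (mul_le_mul_of_nonneg_left hx₀R hδ.le)

theorem le_of_le_frontier_of_le_outside_ball (hΩ : IsOpen Ω)
    (hcont : ContinuousOn u (closure Ω)) (hu : ContDiffOn ℝ 2 u Ω) (hΔ : ∀ x ∈ Ω, 0 ≤ Δ u x)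
    {M R : ℝ} (hfront : ∀ x ∈ frontier Ω, u x ≤ M) (hfar : ∀ x ∈ Ω, R ≤ ‖x‖ → u x ≤ M) :
    ∀ x ∈ Ω, u x ≤ M := by
  intro x hx
  rcases le_or_gt R ‖x‖ with hxR | hxR
  · exact hfar x hx hxR
  refine le_of_forall_pos_le_add fun ε hε => ?_
  have hR : 0 < R ^ 2 := pow_pos ((norm_nonneg x).trans_lt hxR) 2
  have hbound := le_add_of_le_frontier_of_le_outside_ball hΩ hcont hu hΔ hfront hfar
    (div_pos hε hR) hx hxR.le
  rwa [div_mul_cancel₀ _ hR.ne'] at hbound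

theorem nonpos_of_nonpos_frontier_of_tendsto_zero (hΩ : IsOpen Ω)
    (hcont : ContinuousOn u (closure Ω)) (hu : ContDiffOn ℝ 2 u Ω) (hΔ : ∀ x ∈ Ω, 0 ≤ Δ u x)
    (hfront : ∀ x ∈ frontier Ω, u x ≤ 0)
    (hinf : Tendsto u (Bornology.cobounded E ⊓ 𝓟 Ω) (𝓝 0)) :
    ∀ x ∈ Ω, u x ≤ 0 := by
  intro x hx
  refine le_of_forall_pos_le_add fun ε hε => ?_
  rw [zero_add]
  rw [← comap_norm_atTop] at hinf
  obtain ⟨R, hR⟩ := eventually_atTop.mp <| eventually_comap.mp <| eventually_inf_principal.mp <|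
    hinf.eventually (eventually_le_nhds hε)
  exact le_of_le_frontier_of_le_outside_ball hΩ hcont hu hΔ
    (fun y hy => (hfront y hy).trans hε.le) (fun y hy hyR => hR ‖y‖ hyR y rfl hy) x hx

end MaximumPrinciple

theorem IsHarmonicOn.laplacian_eq_zero {n : ℕ} {u : EuclideanSpace ℝ (Fin n) → ℝ}
    {Ω : Set (EuclideanSpace ℝ (Fin n))} (h : IsHarmonicOn u Ω) (hΩ : IsOpen Ω)
    {x : EuclideanSpace ℝ (Fin n)} (hx : x ∈ Ω) : Δ u x = 0 := by
  have hu : ContDiffAt ℝ 2 u x := h.1.contDiffAt (hΩ.mem_nhds hx)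
  rw [laplacian_eq_iteratedFDeriv_orthonormalBasis u (EuclideanSpace.basisFun (Fin n) ℝ)]
  simpa [← hu.fderiv_fderiv_apply] using h.2 x hx

theorem bounded_harmonic_vanishing_general (n : ℕ) (hn : 1 ≤ n)
    (Ω : Set (EuclideanSpace ℝ (Fin n))) (hΩo : IsOpen Ω)
    (u : EuclideanSpace ℝ (Fin n) → ℝ)
    (hcont : ContinuousOn u (closure Ω))
    (hharm : IsHarmonicOn u Ω)
    (hzero : ∀ x ∈ frontier Ω, u x = 0)
    (hinf : Tendsto u (Filter.comap (fun x => ‖x‖) atTop ⊓ Filter.principal Ω) (nhds 0)) :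
    ∀ x ∈ Ω, u x = 0 := by
  have : Nonempty (Fin n) := ⟨⟨0, hn⟩⟩
  have hΔ : ∀ x ∈ Ω, Δ u x = 0 := fun x hx => hharm.laplacian_eq_zero hΩo hx
  rw [comap_norm_atTop] at hinf
  intro x hx
  have hle : u x ≤ 0 := nonpos_of_nonpos_frontier_of_tendsto_zero hΩo hcont hharm.1
    (fun y hy => (hΔ y hy).ge) (fun y hy => (hzero y hy).le) hinf x hx
  have hge : -u x ≤ 0 := nonpos_of_nonpos_frontier_of_tendsto_zero (u := -u) hΩo hcont.neg
    hharm.1.neg (fun y hy => by simp [laplacian_neg, hΔ y hy])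
    (fun y hy => by simp [hzero y hy]) (by rw [← neg_zero]; exact hinf.neg) x hx
  linarith

/-- a bounded harmonic function on a domain `Ω ⊆ ℝ^n`, continuous
up to the boundary, vanishing continuously on `∂Ω` and tending to `0` at
infinity within `Ω`, vanishes identically on `Ω`.  (The probabilistic hypothesis
that Brownian motion either exits `Ω` or tends to infinity almost surely holds
automatically.) -/
theorem bounded_harmonic_vanishing (n : ℕ) (hn : 1 ≤ n)
    (Ω : Set (EuclideanSpace ℝ (Fin n))) (hΩo : IsOpen Ω) (hΩc : IsConnected Ω)
    (u : EuclideanSpace ℝ (Fin n) → ℝ)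
    (hcont : ContinuousOn u (closure Ω))
    (hbdd : ∃ Cu : ℝ, ∀ x, |u x| ≤ Cu)
    (hharm : IsHarmonicOn u Ω)
    (hzero : ∀ x ∈ frontier Ω, u x = 0)
    (hinf : Tendsto u (Filter.comap (fun x => ‖x‖) atTop ⊓ Filter.principal Ω) (nhds 0)) :
    ∀ x ∈ Ω, u x = 0 :=
  bounded_harmonic_vanishing_general n hn Ω hΩo u hcont hharm hzero hinf
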